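/- Let f = h + ḡ be harmonic with f(α) = 0, Jacobian J = |h'|²−|g'|² nonvanishing, and set N(z) = h'(z)̄ f(z) − conj(g'(z)f(z)). Then ∂N/∂z = J everywhere, and at α: ∂(N̄)/∂z (α) = 0, ∂(N/J)/∂z (α) = 1, ∂(N̄/J)/∂z (α) = 0, and ∂²(N/J)/∂z² (α) = −J_z(α)/J(α). -/

import Mathlib

open Complex ComplexConjugate

/-- The Wirtinger derivative `∂f/∂z = (1/2)(∂f/∂x - i ∂f/∂y)`. -/
noncomputable def wirtingerZ (f : ℂ → ℂ) (z : ℂ) : ℂ :=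
  (fderiv ℝ f z 1 - Complex.I * fderiv ℝ f z Complex.I) / 2

/-- The Jacobian `J = |h'|² - |g'|²` of the harmonic map `f = h + conj g`. -/
noncomputable def jac (h g : ℂ → ℂ) (z : ℂ) : ℝ :=
  ‖deriv h z‖ ^ 2 - ‖deriv g z‖ ^ 2

/-- The Jacobian, viewed as a complex-valued function. -/
noncomputable def jacC (h g : ℂ → ℂ) (z : ℂ) : ℂ := (jac h g z : ℂ)

/-- The harmonic pre-Schwarzian derivative `P_H(f) = ∂_z log J` of `f = h + conj g`. -/
noncomputable def preSchwarzianH (h g : ℂ → ℂ) (z : ℂ) : ℂ :=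
  wirtingerZ (fun w => (Real.log (jac h g w) : ℂ)) z

/-- The harmonic Schwarzian derivative `S_H(f) = ∂_z(P_H(f)) - (1/2)(P_H(f))²`. -/
noncomputable def schwarzianH (h g : ℂ → ℂ) (z : ℂ) : ℂ :=
  wirtingerZ (preSchwarzianH h g) z - (1 / 2) * (preSchwarzianH h g z) ^ 2

/-- The classical Schwarzian derivative `S(h) = h'''/h' - (3/2)(h''/h')²`. -/
noncomputable def schwarzian (φ : ℂ → ℂ) (z : ℂ) : ℂ :=
  deriv (deriv (deriv φ)) z / deriv φ z - (3 / 2) * (deriv (deriv φ) z / deriv φ z) ^ 2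

/-- The harmonic map `f = h + conj g`. -/
noncomputable def harm (h g : ℂ → ℂ) (z : ℂ) : ℂ := h z + conj (g z)

/-- `N(z) = conj(h'(z)) f(z) - conj(g'(z) f(z))` for `f = h + conj g`. -/
noncomputable def Nmap (h g : ℂ → ℂ) (z : ℂ) : ℂ :=
  conj (deriv h z) * harm h g z - conj (deriv g z * harm h g z)

/-- The harmonic Newton map `F(z) = z - N(z)/J(z)`. -/
noncomputable def newtonMapH (h g : ℂ → ℂ) (z : ℂ) : ℂ :=
  z - Nmap h g z / jacC h g z

/-- The numerator `A` of the harmonic Halley correction. -/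
noncomputable def Amap (h g : ℂ → ℂ) (z : ℂ) : ℂ :=
  (conj (deriv h z) - conj (deriv (deriv h) z) / 2 * (conj (Nmap h g z) / jacC h g z)) *
      harm h g z -
    (conj (deriv g z) - conj (deriv (deriv g) z) / 2 * (conj (Nmap h g z) / jacC h g z)) *
      conj (harm h g z)

/-- The denominator `B` of the harmonic Halley correction. -/
noncomputable def Bmap (h g : ℂ → ℂ) (z : ℂ) : ℂ :=
  ((‖deriv h z - deriv (deriv h) z / 2 * (Nmap h g z / jacC h g z)‖ ^ 2 -
      ‖deriv g z - deriv (deriv g) z / 2 * (Nmap h g z / jacC h g z)‖ ^ 2 : ℝ) : ℂ)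

/-- The harmonic Halley map `F(z) = z - A(z)/B(z)`. -/
noncomputable def halleyMapH (h g : ℂ → ℂ) (z : ℂ) : ℂ :=
  z - Amap h g z / Bmap h g z

section helpers
variable {f f₁ f₂ : ℂ → ℂ} {z c : ℂ}

lemma wZ_apply {L : ℂ →L[ℝ] ℂ} (hf : HasFDerivAt f L z) :
    wirtingerZ f z = (L 1 - Complex.I * L Complex.I) / 2 := by
  rw [wirtingerZ, hf.fderiv]

lemma wZ_congr (h : f₁ =ᶠ[nhds z] f₂) : wirtingerZ f₁ z = wirtingerZ f₂ z := by
  rw [wirtingerZ, wirtingerZ, h.fderiv_eq]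

lemma wZ_const : wirtingerZ (fun _ => c) z = 0 := by
  rw [wZ_apply (hasFDerivAt_const c z)]; simp

lemma wZ_add (h₁ : DifferentiableAt ℝ f₁ z) (h₂ : DifferentiableAt ℝ f₂ z) :
    wirtingerZ (fun w => f₁ w + f₂ w) z = wirtingerZ f₁ z + wirtingerZ f₂ z := by
  rw [wZ_apply (h₁.hasFDerivAt.fun_add h₂.hasFDerivAt), wirtingerZ, wirtingerZ]
  simp; ring

lemma wZ_sub (h₁ : DifferentiableAt ℝ f₁ z) (h₂ : DifferentiableAt ℝ f₂ z) :
    wirtingerZ (fun w => f₁ w - f₂ w) z = wirtingerZ f₁ z - wirtingerZ f₂ z := by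
  rw [wZ_apply (h₁.hasFDerivAt.fun_sub h₂.hasFDerivAt), wirtingerZ, wirtingerZ]
  simp; ring

lemma wZ_mul (h₁ : DifferentiableAt ℝ f₁ z) (h₂ : DifferentiableAt ℝ f₂ z) :
    wirtingerZ (fun w => f₁ w * f₂ w) z =
      wirtingerZ f₁ z * f₂ z + f₁ z * wirtingerZ f₂ z := by
  rw [wZ_apply (h₁.hasFDerivAt.fun_mul h₂.hasFDerivAt), wirtingerZ, wirtingerZ]
  simp [smul_eq_mul]; ring

lemma wZ_comp {φ : ℂ → ℂ} (hφ : DifferentiableAt ℂ φ (f z)) (hf : DifferentiableAt ℝ f z) :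
    wirtingerZ (fun w => φ (f w)) z = deriv φ (f z) * wirtingerZ f z := by
  have H : HasFDerivAt φ (((1 : ℂ →L[ℂ] ℂ).smulRight (deriv φ (f z))).restrictScalars ℝ) (f z) :=
    (hφ.hasDerivAt.hasFDerivAt).restrictScalars ℝ
  have e : wirtingerZ (fun w => φ (f w)) z = wirtingerZ (φ ∘ f) z := rfl
  rw [e, wZ_apply (H.comp z hf.hasFDerivAt), wirtingerZ]
  simp [smul_eq_mul]; ring

lemma wZ_holo (hf : DifferentiableAt ℂ f z) : wirtingerZ f z = deriv f z := by
  have H : HasFDerivAt f (((1 : ℂ →L[ℂ] ℂ).smulRight (deriv f z)).restrictScalars ℝ) z :=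
    (hf.hasDerivAt.hasFDerivAt).restrictScalars ℝ
  rw [wZ_apply H]
  simp [smul_eq_mul, Complex.ext_iff]

lemma wZ_conj_holo (hf : DifferentiableAt ℂ f z) :
    wirtingerZ (fun w => conj (f w)) z = 0 := by
  have H : HasFDerivAt f (((1 : ℂ →L[ℂ] ℂ).smulRight (deriv f z)).restrictScalars ℝ) z :=
    (hf.hasDerivAt.hasFDerivAt).restrictScalars ℝ
  have H2 := (Complex.conjCLE.toContinuousLinearMap.hasFDerivAt (x := f z)).comp z H
  have e : wirtingerZ (fun w => conj (f w)) z =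
      wirtingerZ (Complex.conjCLE.toContinuousLinearMap ∘ f) z := rfl
  rw [e, wZ_apply H2]
  simp [smul_eq_mul, Complex.ext_iff]

lemma wZ_inv (hf : DifferentiableAt ℝ f z) (h0 : f z ≠ 0) :
    wirtingerZ (fun w => (f w)⁻¹) z = -((f z ^ 2)⁻¹ * wirtingerZ f z) := by
  rw [wZ_comp (differentiableAt_inv h0) hf, deriv_inv]
  ring

lemma diffR_conj (hf : DifferentiableAt ℝ f z) :
    DifferentiableAt ℝ (fun w => conj (f w)) z :=
  (Complex.conjCLE.differentiable.differentiableAt (x := f z)).comp z hf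

variable {h g : ℂ → ℂ}

lemma NE : Nmap h g = fun w =>
    conj (deriv h w) * (h w + conj (g w)) - conj (deriv g w) * (conj (h w) + g w) := by
  funext w; simp [Nmap, harm, map_mul, map_add]

lemma NbE : (fun w => conj (Nmap h g w)) = fun w =>
    deriv h w * (conj (h w) + g w) - deriv g w * (h w + conj (g w)) := by
  funext w; simp [Nmap, harm, map_mul, map_add, map_sub]

lemma JE : jacC h g = fun w =>
    conj (deriv h w) * deriv h w - conj (deriv g w) * deriv g w := by
  funext w
  rw [jacC, jac, Complex.ofReal_sub, Complex.sq_norm, Complex.sq_norm,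
    ← Complex.mul_conj, ← Complex.mul_conj]
  ring
end helpers

theorem Nmap_wirtinger_identities (h g : ℂ → ℂ) (U : Set ℂ) (hU : IsOpen U) (α : ℂ)
    (hα : α ∈ U) (hh : DifferentiableOn ℂ h U) (hg : DifferentiableOn ℂ g U)
    (hJ : ∀ z ∈ U, jac h g z ≠ 0) (hzero : harm h g α = 0) :
    (∀ z ∈ U, wirtingerZ (Nmap h g) z = jacC h g z) ∧
      wirtingerZ (fun w => conj (Nmap h g w)) α = 0 ∧
      wirtingerZ (fun w => Nmap h g w / jacC h g w) α = 1 ∧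
      wirtingerZ (fun w => conj (Nmap h g w) / jacC h g w) α = 0 ∧
      wirtingerZ (wirtingerZ (fun w => Nmap h g w / jacC h g w)) α =
        -(wirtingerZ (jacC h g) α / jacC h g α) := by
  have Hh : AnalyticOnNhd ℂ h U := hh.analyticOnNhd hU
  have Hg : AnalyticOnNhd ℂ g U := hg.analyticOnNhd hU
  have Hh1 : AnalyticOnNhd ℂ (deriv h) U := Hh.deriv
  have Hg1 : AnalyticOnNhd ℂ (deriv g) U := Hg.deriv
  have Hh2 : AnalyticOnNhd ℂ (deriv (deriv h)) U := Hh1.deriv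
  have Hg2 : AnalyticOnNhd ℂ (deriv (deriv g)) U := Hg1.deriv
  -- complex differentiability at points of U
  have Dh : ∀ z ∈ U, DifferentiableAt ℂ h z := fun z hz => (Hh z hz).differentiableAt
  have Dg : ∀ z ∈ U, DifferentiableAt ℂ g z := fun z hz => (Hg z hz).differentiableAt
  have Dh1 : ∀ z ∈ U, DifferentiableAt ℂ (deriv h) z := fun z hz => (Hh1 z hz).differentiableAt
  have Dg1 : ∀ z ∈ U, DifferentiableAt ℂ (deriv g) z := fun z hz => (Hg1 z hz).differentiableAt
  have Dh2 : ∀ z ∈ U, DifferentiableAt ℂ (deriv (deriv h)) z :=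
    fun z hz => (Hh2 z hz).differentiableAt
  have Dg2 : ∀ z ∈ U, DifferentiableAt ℂ (deriv (deriv g)) z :=
    fun z hz => (Hg2 z hz).differentiableAt
  -- real differentiability of the building blocks
  have dF : ∀ z ∈ U, DifferentiableAt ℝ (fun w => h w + conj (g w)) z := fun z hz =>
    ((Dh z hz).restrictScalars ℝ).add (diffR_conj ((Dg z hz).restrictScalars ℝ))
  have dFb : ∀ z ∈ U, DifferentiableAt ℝ (fun w => conj (h w) + g w) z := fun z hz =>
    (diffR_conj ((Dh z hz).restrictScalars ℝ)).add ((Dg z hz).restrictScalars ℝ)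
  have dN : ∀ z ∈ U, DifferentiableAt ℝ (Nmap h g) z := by
    intro z hz
    rw [NE]
    exact ((diffR_conj ((Dh1 z hz).restrictScalars ℝ)).mul (dF z hz)).sub
      ((diffR_conj ((Dg1 z hz).restrictScalars ℝ)).mul (dFb z hz))
  have dNb : ∀ z ∈ U, DifferentiableAt ℝ (fun w => conj (Nmap h g w)) z := by
    intro z hz
    rw [NbE]
    exact (((Dh1 z hz).restrictScalars ℝ).mul (dFb z hz)).sub
      (((Dg1 z hz).restrictScalars ℝ).mul (dF z hz))
  have dJ : ∀ z ∈ U, DifferentiableAt ℝ (jacC h g) z := by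
    intro z hz
    rw [JE]
    exact ((diffR_conj ((Dh1 z hz).restrictScalars ℝ)).mul ((Dh1 z hz).restrictScalars ℝ)).sub
      ((diffR_conj ((Dg1 z hz).restrictScalars ℝ)).mul ((Dg1 z hz).restrictScalars ℝ))
  have Jne : ∀ z ∈ U, jacC h g z ≠ 0 := fun z hz => Complex.ofReal_ne_zero.mpr (hJ z hz)
  -- basic Wirtinger values
  have wF : ∀ z ∈ U, wirtingerZ (fun w => h w + conj (g w)) z = deriv h z := by
    intro z hz
    rw [wZ_add ((Dh z hz).restrictScalars ℝ) (diffR_conj ((Dg z hz).restrictScalars ℝ)),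
      wZ_holo (Dh z hz), wZ_conj_holo (Dg z hz), add_zero]
  have wFb : ∀ z ∈ U, wirtingerZ (fun w => conj (h w) + g w) z = deriv g z := by
    intro z hz
    rw [wZ_add (diffR_conj ((Dh z hz).restrictScalars ℝ)) ((Dg z hz).restrictScalars ℝ),
      wZ_holo (Dg z hz), wZ_conj_holo (Dh z hz), zero_add]
  have wN : ∀ z ∈ U, wirtingerZ (Nmap h g) z = jacC h g z := by
    intro z hz
    rw [NE,
      wZ_sub ((diffR_conj ((Dh1 z hz).restrictScalars ℝ)).fun_mul (dF z hz))
        ((diffR_conj ((Dg1 z hz).restrictScalars ℝ)).fun_mul (dFb z hz)),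
      wZ_mul (diffR_conj ((Dh1 z hz).restrictScalars ℝ)) (dF z hz),
      wZ_mul (diffR_conj ((Dg1 z hz).restrictScalars ℝ)) (dFb z hz),
      wZ_conj_holo (Dh1 z hz), wZ_conj_holo (Dg1 z hz), wF z hz, wFb z hz]
    simp only [JE]
    ring
  have wJ : ∀ z ∈ U, wirtingerZ (jacC h g) z =
      conj (deriv h z) * deriv (deriv h) z - conj (deriv g z) * deriv (deriv g) z := by
    intro z hz
    rw [JE,
      wZ_sub ((diffR_conj ((Dh1 z hz).restrictScalars ℝ)).fun_mul ((Dh1 z hz).restrictScalars ℝ))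
        ((diffR_conj ((Dg1 z hz).restrictScalars ℝ)).fun_mul ((Dg1 z hz).restrictScalars ℝ)),
      wZ_mul (diffR_conj ((Dh1 z hz).restrictScalars ℝ)) ((Dh1 z hz).restrictScalars ℝ),
      wZ_mul (diffR_conj ((Dg1 z hz).restrictScalars ℝ)) ((Dg1 z hz).restrictScalars ℝ),
      wZ_conj_holo (Dh1 z hz), wZ_conj_holo (Dg1 z hz), wZ_holo (Dh1 z hz), wZ_holo (Dg1 z hz)]
    ring
  -- facts at α
  have Fα : h α + conj (g α) = 0 := hzero
  have Fbα : conj (h α) + g α = 0 := by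
    rw [show conj (h α) + g α = conj (h α + conj (g α)) by simp, Fα, map_zero]
  have Nα : Nmap h g α = 0 := by
    rw [Nmap, hzero]; simp
  -- part 2
  have part2 : wirtingerZ (fun w => conj (Nmap h g w)) α = 0 := by
    rw [NbE,
      wZ_sub (((Dh1 α hα).restrictScalars ℝ).fun_mul (dFb α hα))
        (((Dg1 α hα).restrictScalars ℝ).fun_mul (dF α hα)),
      wZ_mul ((Dh1 α hα).restrictScalars ℝ) (dFb α hα),
      wZ_mul ((Dg1 α hα).restrictScalars ℝ) (dF α hα),
      wZ_holo (Dh1 α hα), wZ_holo (Dg1 α hα), wF α hα, wFb α hα, Fα, Fbα]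
    ring
  refine ⟨wN, part2, ?_, ?_, ?_⟩
  · -- part 3
    simp only [div_eq_mul_inv]
    rw [wZ_mul (dN α hα) ((dJ α hα).fun_inv (Jne α hα)), wN α hα, Nα]
    simp [mul_inv_cancel₀ (Jne α hα)]
  · -- part 4
    simp only [div_eq_mul_inv]
    rw [wZ_mul (dNb α hα) ((dJ α hα).fun_inv (Jne α hα)), part2, Nα]
    simp
  · -- part 5
    have EV : wirtingerZ (fun w => Nmap h g w / jacC h g w) =ᶠ[nhds α] (fun w =>
        1 - Nmap h g w * ((conj (deriv h w) * deriv (deriv h) w -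
          conj (deriv g w) * deriv (deriv g) w) * ((jacC h g w)⁻¹) ^ 2)) := by
      filter_upwards [hU.mem_nhds hα] with z hz
      simp only [div_eq_mul_inv]
      rw [wZ_mul (dN z hz) ((dJ z hz).fun_inv (Jne z hz)), wN z hz,
        wZ_inv (dJ z hz) (Jne z hz), wJ z hz, mul_inv_cancel₀ (Jne z hz)]
      ring
    rw [wZ_congr EV]
    have dP : DifferentiableAt ℝ (fun w => (conj (deriv h w) * deriv (deriv h) w -
        conj (deriv g w) * deriv (deriv g) w) * ((jacC h g w)⁻¹) ^ 2) α :=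
      (((diffR_conj ((Dh1 α hα).restrictScalars ℝ)).mul ((Dh2 α hα).restrictScalars ℝ)).sub
        ((diffR_conj ((Dg1 α hα).restrictScalars ℝ)).mul ((Dg2 α hα).restrictScalars ℝ))).mul
        (((dJ α hα).inv (Jne α hα)).pow 2)
    rw [wZ_sub (differentiableAt_const 1) ((dN α hα).fun_mul dP), wZ_const,
      wZ_mul (dN α hα) dP, wN α hα, Nα, wJ α hα]
    field_simp [Jne α hα]
    ring
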